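/- arXiv:2206.13648 — 2 statements merged into one kernel-verified Lean document; each statement's English description precedes it below -/
import Mathlib

section
/- Let X_1, ..., X_n be independent symmetric real-valued random variables such that Σ_{i=1}^n X_i is σ²-subGaussian, i.e., E[exp(λ Σ_{i=1}^n X_i)] ≤ exp(λ²σ²/2) for all λ ∈ ℝ. Then for all λ ≥ 0, E[exp(λ · max_{0 ≤ j ≤ n} Σ_{i=1}^j X_i)] ≤ 2 · exp(λ²σ²/2). -/
open MeasureTheory ProbabilityTheory

section LevyAux

variable {Ω : Type*} [MeasureSpace Ω] [IsProbabilityMeasure (ℙ : Measure Ω)]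
  {n : ℕ} {X : Fin n → Ω → ℝ}

private lemma aux_symm_sum (hmeas : ∀ i, Measurable (X i))
    (hindep : iIndepFun X ℙ)
    (hsymm : ∀ i, Measure.map (X i) ℙ = Measure.map (fun ω => -(X i ω)) ℙ)
    (t : Finset (Fin n)) :
    Measure.map (fun ω => ∑ i ∈ t, X i ω) ℙ = Measure.map (fun ω => -∑ i ∈ t, X i ω) ℙ := by
  classical
  have key : ∀ (f g : Ω → ℝ), Measurable f → Measurable g → IndepFun f g ℙ →
      Measure.map (fun ω => f ω + g ω) ℙ
        = Measure.map (fun p : ℝ × ℝ => p.1 + p.2) ((Measure.map f ℙ).prod (Measure.map g ℙ)) := by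
    intro f g hf hg hfg
    rw [← (indepFun_iff_map_prod_eq_prod_map_map hf.aemeasurable hg.aemeasurable).mp hfg,
      Measure.map_map (by fun_prop) (by fun_prop)]
    rfl
  induction t using Finset.induction_on with
  | empty => simp
  | @insert a s ha ih =>
      set T : Ω → ℝ := fun ω => ∑ i ∈ s, X i ω with hT
      have hTm : Measurable T := Finset.measurable_sum _ fun i _ => hmeas i
      have hsum : (∑ j ∈ s, X j) = T := by
        ext ω; simp [hT, Finset.sum_apply]
      have hind : IndepFun (X a) T ℙ := by
        have h := (hindep.indepFun_finsetSum_of_notMem hmeas ha).symm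
        rwa [hsum] at h
      have hindn : IndepFun (fun ω => -(X a ω)) (fun ω => -(T ω)) ℙ :=
        hind.comp measurable_neg measurable_neg
      have hXam : Measurable fun ω => -(X a ω) := (hmeas a).neg
      have hTmn : Measurable fun ω => -(T ω) := hTm.neg
      calc Measure.map (fun ω => ∑ i ∈ insert a s, X i ω) ℙ
          = Measure.map (fun ω => X a ω + T ω) ℙ := by
            simp only [Finset.sum_insert ha]
            rfl
        _ = Measure.map (fun p : ℝ × ℝ => p.1 + p.2)
              ((Measure.map (X a) ℙ).prod (Measure.map T ℙ)) :=
            key _ _ (hmeas a) hTm hind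
        _ = Measure.map (fun p : ℝ × ℝ => p.1 + p.2)
            ((Measure.map (fun ω => -(X a ω)) ℙ).prod (Measure.map (fun ω => -(T ω)) ℙ)) := by
            rw [← hsymm a, ← ih]
        _ = Measure.map (fun ω => -(X a ω) + -(T ω)) ℙ := (key _ _ hXam hTmn hindn).symm
        _ = Measure.map (fun ω => -∑ i ∈ insert a s, X i ω) ℙ := by
            simp only [Finset.sum_insert ha, neg_add]
            rfl

private lemma aux_half (hmeas : ∀ i, Measurable (X i))
    (hindep : iIndepFun X ℙ)
    (hsymm : ∀ i, Measure.map (X i) ℙ = Measure.map (fun ω => -(X i ω)) ℙ)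
    (t : Finset (Fin n)) :
    1 ≤ 2 * ℙ {ω | 0 ≤ ∑ i ∈ t, X i ω} := by
  set T : Ω → ℝ := fun ω => ∑ i ∈ t, X i ω with hT
  have hTm : Measurable T := Finset.measurable_sum _ fun i _ => hmeas i
  have hmap : Measure.map T ℙ = Measure.map (fun ω => -(T ω)) ℙ :=
    aux_symm_sum hmeas hindep hsymm t
  have heq : ℙ {ω | 0 ≤ T ω} = ℙ {ω | T ω ≤ 0} := by
    have h1 : ℙ {ω | 0 ≤ T ω} = Measure.map T ℙ (Set.Ici 0) := by
      rw [Measure.map_apply hTm measurableSet_Ici]; rfl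
    have h2 : Measure.map (fun ω => -(T ω)) ℙ (Set.Ici 0) = ℙ {ω | T ω ≤ 0} := by
      rw [Measure.map_apply (f := fun ω => -(T ω)) hTm.neg measurableSet_Ici]
      congr 1
      ext ω
      simp [neg_nonneg]
    rw [h1, hmap, h2]
  have hcover : (Set.univ : Set Ω) ⊆ {ω | T ω ≤ 0} ∪ {ω | 0 ≤ T ω} :=
    fun ω _ => le_total (T ω) 0
  calc (1 : ENNReal) = ℙ Set.univ := measure_univ.symm
    _ ≤ ℙ ({ω | T ω ≤ 0} ∪ {ω | 0 ≤ T ω}) := measure_mono hcover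
    _ ≤ ℙ {ω | T ω ≤ 0} + ℙ {ω | 0 ≤ T ω} := measure_union_le _ _
    _ = 2 * ℙ {ω | 0 ≤ T ω} := by rw [heq, two_mul]

private lemma aux_levy (hmeas : ∀ i, Measurable (X i))
    (hindep : iIndepFun X ℙ)
    (hsymm : ∀ i, Measure.map (X i) ℙ = Measure.map (fun ω => -(X i ω)) ℙ)
    (s : ℝ) :
    ℙ {ω | ∃ j, j ≤ n ∧
        s < ∑ i ∈ Finset.univ.filter (fun i : Fin n => (i : ℕ) < j), X i ω}
      ≤ 2 * ℙ {ω | s < ∑ i, X i ω} := by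
  classical
  set S : ℕ → Ω → ℝ :=
    fun j ω => ∑ i ∈ Finset.univ.filter (fun i : Fin n => (i : ℕ) < j), X i ω with hSdef
  set T : ℕ → Ω → ℝ :=
    fun j ω => ∑ i ∈ Finset.univ.filter (fun i : Fin n => j ≤ (i : ℕ)), X i ω with hTdef
  have hSmeas : ∀ j, Measurable (S j) := fun j => Finset.measurable_sum _ fun i _ => hmeas i
  have hTmeas : ∀ j, Measurable (T j) := fun j => Finset.measurable_sum _ fun i _ => hmeas i
  have hdisjslr : ∀ j : ℕ, Disjoint (Finset.univ.filter (fun i : Fin n => (i : ℕ) < j))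
      (Finset.univ.filter (fun i : Fin n => j ≤ (i : ℕ))) := by
    intro j
    rw [Finset.disjoint_filter]
    intro i _ h1 h2
    omega
  have hST : ∀ j ω, S j ω + T j ω = ∑ i, X i ω := by
    intro j ω
    have hsplit : Finset.univ.filter (fun i : Fin n => (i : ℕ) < j)
        ∪ Finset.univ.filter (fun i : Fin n => j ≤ (i : ℕ)) = Finset.univ := by
      ext i
      simp only [Finset.mem_union, Finset.mem_filter, Finset.mem_univ, true_and, iff_true]
      omega
    rw [hSdef, hTdef]
    dsimp only
    rw [← Finset.sum_union (hdisjslr j), hsplit]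
  set A : ℕ → Set Ω := fun j => {ω | s < S j ω ∧ ∀ k < j, S k ω ≤ s} with hAdef
  set B : ℕ → Set Ω := fun j => {ω | 0 ≤ T j ω} with hBdef
  have hAmeas : ∀ j, MeasurableSet (A j) := by
    intro j
    have : A j = {ω | s < S j ω} ∩ ⋂ k ∈ Finset.range j, {ω | S k ω ≤ s} := by
      ext ω
      simp [hAdef, Finset.mem_range]
    rw [this]
    exact (measurableSet_lt measurable_const (hSmeas j)).inter
      (MeasurableSet.biInter (Set.to_countable _)
        fun k _ => measurableSet_le (hSmeas k) measurable_const)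
  have hBmeas : ∀ j, MeasurableSet (B j) :=
    fun j => measurableSet_le measurable_const (hTmeas j)
  have hAdisj : ∀ j k, j ≠ k → Disjoint (A j) (A k) := by
    intro j k hjk
    rcases lt_or_gt_of_ne hjk with h | h
    · refine Set.disjoint_left.mpr ?_
      rintro ω ⟨hj, -⟩ ⟨-, hk⟩
      exact absurd hj (not_lt.mpr (hk j h))
    · refine Set.disjoint_left.mpr ?_
      rintro ω ⟨-, hj⟩ ⟨hk, -⟩
      exact absurd hk (not_lt.mpr (hj k h))
  have hunion : {ω | ∃ j, j ≤ n ∧ s < S j ω} ⊆ ⋃ j ∈ Finset.range (n + 1), A j := by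
    intro ω hω
    obtain ⟨j, hj, hjs⟩ := hω
    have hex : ∃ k, s < S k ω := ⟨j, hjs⟩
    have hk : s < S (Nat.find hex) ω := Nat.find_spec hex
    have hkj : Nat.find hex ≤ j := Nat.find_min' hex hjs
    exact Set.mem_biUnion (Finset.mem_range.mpr (by omega))
      ⟨hk, fun m hm => not_lt.mp (Nat.find_min hex hm)⟩
  -- independence of A j and B j
  have hkey : ∀ j, ℙ (A j ∩ B j) = ℙ (A j) * ℙ (B j) := by
    intro j
    set sl : Finset (Fin n) := Finset.univ.filter (fun i : Fin n => (i : ℕ) < j) with hsl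
    set sr : Finset (Fin n) := Finset.univ.filter (fun i : Fin n => j ≤ (i : ℕ)) with hsr
    have hIF := hindep.indepFun_finset sl sr (hdisjslr j) hmeas
    set g : ℕ → ((i : sl) → ℝ) → ℝ :=
      fun k v => ∑ i : sl, if ((i : Fin n) : ℕ) < k then v i else 0 with hgdef
    have hgmeas : ∀ k, Measurable (g k) := by
      intro k
      apply Finset.measurable_sum
      intro i _
      by_cases h : ((i : Fin n) : ℕ) < k
      · simpa [h] using measurable_pi_apply i
      · simp [h]
    have hg : ∀ k, k ≤ j → ∀ ω, g k (fun i : sl => X i ω) = S k ω := by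
      intro k hk ω
      have e1 : g k (fun i : sl => X i ω)
          = ∑ i ∈ sl, (if i.val < k then X i ω else 0) :=
        Finset.sum_coe_sort sl (fun i : Fin n => if i.val < k then X i ω else 0)
      have e2 : (∑ i ∈ sl, (if i.val < k then X i ω else 0))
          = ∑ i ∈ sl.filter (fun i : Fin n => i.val < k), X i ω := (Finset.sum_filter _ _).symm
      have e3 : sl.filter (fun i : Fin n => i.val < k)
          = Finset.univ.filter (fun i : Fin n => (i : ℕ) < k) := by
        ext i
        simp only [hsl, Finset.mem_filter, Finset.mem_univ, true_and]
        omega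
      rw [e1, e2, e3, hSdef]
    have hTsum : ∀ ω, (∑ i : sr, X (i : Fin n) ω) = T j ω := by
      intro ω
      rw [Finset.sum_coe_sort sr (fun i => X i ω), hTdef]
    set CA : Set ((i : sl) → ℝ) := {v | s < g j v ∧ ∀ k < j, g k v ≤ s} with hCAdef
    set CB : Set ((i : sr) → ℝ) := {v | 0 ≤ ∑ i : sr, v i} with hCBdef
    have hCA : MeasurableSet CA := by
      have : CA = {v | s < g j v} ∩ ⋂ k ∈ Finset.range j, {v | g k v ≤ s} := by
        ext v
        simp [hCAdef, Finset.mem_range]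
      rw [this]
      exact (measurableSet_lt measurable_const (hgmeas j)).inter
        (MeasurableSet.biInter (Set.to_countable _)
          fun k _ => measurableSet_le (hgmeas k) measurable_const)
    have hCB : MeasurableSet CB :=
      measurableSet_le measurable_const (Finset.measurable_sum _ fun i _ => measurable_pi_apply i)
    have hApre : A j = (fun a (i : sl) => X (i : Fin n) a) ⁻¹' CA := by
      ext ω
      constructor
      · rintro ⟨h1, h2⟩
        exact ⟨by rw [hg j le_rfl]; exact h1,
          fun k hk => by rw [hg k hk.le]; exact h2 k hk⟩
      · rintro ⟨h1, h2⟩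
        rw [hg j le_rfl] at h1
        refine ⟨h1, fun k hk => ?_⟩
        have := h2 k hk
        rwa [hg k hk.le] at this
    have hBpre : B j = (fun a (i : sr) => X (i : Fin n) a) ⁻¹' CB := by
      ext ω
      constructor
      · intro h
        show (0 : ℝ) ≤ _
        rw [hTsum ω]
        exact h
      · intro h
        have h' : (0 : ℝ) ≤ ∑ i : sr, X (i : Fin n) ω := h
        rw [hTsum ω] at h'
        exact h'
    rw [hApre, hBpre]
    exact (indepFun_iff_measure_inter_preimage_eq_mul.mp hIF) CA CB hCA hCB
  have hmain : ∀ j, ℙ (A j) ≤ 2 * ℙ (A j ∩ B j) := by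
    intro j
    have hB2 : (1 : ENNReal) ≤ 2 * ℙ (B j) :=
      aux_half hmeas hindep hsymm (Finset.univ.filter (fun i : Fin n => j ≤ (i : ℕ)))
    calc ℙ (A j) = ℙ (A j) * 1 := (mul_one _).symm
      _ ≤ ℙ (A j) * (2 * ℙ (B j)) := mul_le_mul_right hB2 _
      _ = 2 * (ℙ (A j) * ℙ (B j)) := by ring
      _ = 2 * ℙ (A j ∩ B j) := by rw [hkey j]
  calc ℙ {ω | ∃ j, j ≤ n ∧ s < S j ω}
      ≤ ℙ (⋃ j ∈ Finset.range (n + 1), A j) := measure_mono hunion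
    _ = ∑ j ∈ Finset.range (n + 1), ℙ (A j) :=
        measure_biUnion_finset (fun j _ k _ hjk => hAdisj j k hjk) (fun j _ => hAmeas j)
    _ ≤ ∑ j ∈ Finset.range (n + 1), 2 * ℙ (A j ∩ B j) :=
        Finset.sum_le_sum fun j _ => hmain j
    _ = 2 * ∑ j ∈ Finset.range (n + 1), ℙ (A j ∩ B j) := (Finset.mul_sum _ _ _).symm
    _ = 2 * ℙ (⋃ j ∈ Finset.range (n + 1), A j ∩ B j) := by
        rw [measure_biUnion_finset
          (fun j _ k _ hjk => (hAdisj j k hjk).mono Set.inter_subset_left Set.inter_subset_left)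
          (fun j _ => (hAmeas j).inter (hBmeas j))]
    _ ≤ 2 * ℙ {ω | s < ∑ i, X i ω} := by
        gcongr
        intro ω hω
        simp only [Set.mem_iUnion] at hω
        obtain ⟨j, -, hA, hB⟩ := hω
        have h1 : s < S j ω := hA.1
        have h0 : (0 : ℝ) ≤ T j ω := hB
        have h2 := hST j ω
        show s < ∑ i, X i ω
        linarith

end LevyAux

/-- If `X 1, ..., X n` are independent symmetric real random variables whose sum is
`σ²`-subGaussian, then for all `λ ≥ 0`,
`E[exp(λ · max_{0 ≤ j ≤ n} Σ_{i=1}^j X i)] ≤ 2 · exp(λ²σ²/2)`. -/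
theorem stmt_5 {Ω : Type*} [MeasureSpace Ω] [IsProbabilityMeasure (ℙ : Measure Ω)]
    (n : ℕ) (X : Fin n → Ω → ℝ) (σ : ℝ)
    (hmeas : ∀ i, Measurable (X i))
    (hindep : iIndepFun X ℙ)
    (hsymm : ∀ i, Measure.map (X i) ℙ = Measure.map (fun ω => -(X i ω)) ℙ)
    (hsub : ∀ l : ℝ, ∫ ω, Real.exp (l * ∑ i, X i ω) ≤ Real.exp (l ^ 2 * σ ^ 2 / 2))
    (l : ℝ) (hl : 0 ≤ l) :
    ∫ ω, Real.exp (l * (Finset.range (n + 1)).sup'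
        (Finset.nonempty_range_iff.mpr (Nat.succ_ne_zero n))
        (fun j => ∑ i ∈ Finset.univ.filter (fun i : Fin n => (i : ℕ) < j), X i ω)) ≤
      2 * Real.exp (l ^ 2 * σ ^ 2 / 2) := by
  classical
  set M : Ω → ℝ := fun ω => (Finset.range (n + 1)).sup'
      (Finset.nonempty_range_iff.mpr (Nat.succ_ne_zero n))
      (fun j => ∑ i ∈ Finset.univ.filter (fun i : Fin n => (i : ℕ) < j), X i ω) with hM
  have hMmeas : Measurable M := by
    have h := Finset.measurable_sup' (Finset.nonempty_range_iff.mpr (Nat.succ_ne_zero n))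
      (f := fun j (ω : Ω) => ∑ i ∈ Finset.univ.filter (fun i : Fin n => (i : ℕ) < j), X i ω)
      (fun j _ => Finset.measurable_sum _ fun i _ => hmeas i)
    convert h using 1
    ext ω
    rw [hM]
    exact (Finset.sup'_apply (Finset.nonempty_range_iff.mpr (Nat.succ_ne_zero n))
      (fun j (ω : Ω) => ∑ i ∈ Finset.univ.filter (fun i : Fin n => (i : ℕ) < j), X i ω) ω).symm
  rcases eq_or_lt_of_le hl with h0 | hlpos
  · rw [← h0]
    simp
  set Stot : Ω → ℝ := fun ω => ∑ i, X i ω with hStot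
  have hStotmeas : Measurable Stot := Finset.measurable_sum _ fun i _ => hmeas i
  have hSM : ∀ ω, Stot ω ≤ M ω := by
    intro ω
    have hn : n ∈ Finset.range (n + 1) := Finset.self_mem_range_succ n
    have hfe : Finset.univ.filter (fun i : Fin n => (i : ℕ) < n) = Finset.univ :=
      Finset.filter_true_of_mem fun i _ => i.isLt
    refine le_trans (le_of_eq ?_) (Finset.le_sup'
      (fun j => ∑ i ∈ Finset.univ.filter (fun i : Fin n => (i : ℕ) < j), X i ω) hn)
    rw [hfe, hStot]
  set Y : Ω → ℝ := fun ω => Real.exp (l * M ω) with hYdef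
  set Z : Ω → ℝ := fun ω => Real.exp (l * Stot ω) with hZdef
  have hZY : ∀ ω, Z ω ≤ Y ω := fun ω =>
    Real.exp_le_exp.mpr (mul_le_mul_of_nonneg_left (hSM ω) hl)
  have hYm : Measurable Y := (hMmeas.const_mul l).exp
  have hZm : Measurable Z := (hStotmeas.const_mul l).exp
  by_cases hint : Integrable Y ℙ
  · have hZint : Integrable Z ℙ := by
      refine hint.mono hZm.aestronglyMeasurable (ae_of_all _ fun ω => ?_)
      rw [Real.norm_eq_abs, Real.norm_eq_abs, abs_of_pos (Real.exp_pos _),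
        abs_of_pos (Real.exp_pos _)]
      exact hZY ω
    have hY0 : 0 ≤ᵐ[ℙ] Y := ae_of_all _ fun ω => (Real.exp_pos _).le
    have hZ0 : 0 ≤ᵐ[ℙ] Z := ae_of_all _ fun ω => (Real.exp_pos _).le
    have hlevy : ∀ t : ℝ, 0 < t → ℙ {a | t < Y a} ≤ 2 * ℙ {a | t < Z a} := by
      intro t ht
      have hset : ∀ (W : Ω → ℝ) (ω : Ω),
          (t < Real.exp (l * W ω)) ↔ (Real.log t / l < W ω) := by
        intro W ω
        constructor
        · intro h
          rw [div_lt_iff₀ hlpos, mul_comm]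
          exact (Real.log_lt_iff_lt_exp ht).mpr h
        · intro h
          refine (Real.log_lt_iff_lt_exp ht).mp ?_
          rw [div_lt_iff₀ hlpos, mul_comm] at h
          exact h
      have h1 : {a | t < Y a} = {ω | ∃ j, j ≤ n ∧
          Real.log t / l < ∑ i ∈ Finset.univ.filter (fun i : Fin n => (i : ℕ) < j), X i ω} := by
        ext ω
        rw [Set.mem_setOf_eq, Set.mem_setOf_eq, hset M ω, hM]
        rw [Finset.lt_sup'_iff]
        constructor
        · rintro ⟨j, hj, h⟩
          exact ⟨j, Finset.mem_range_succ_iff.mp hj, h⟩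
        · rintro ⟨j, hj, h⟩
          exact ⟨j, Finset.mem_range_succ_iff.mpr hj, h⟩
      have h2 : {a | t < Z a} = {ω | Real.log t / l < Stot ω} := by
        ext ω
        rw [Set.mem_setOf_eq, Set.mem_setOf_eq, hset Stot ω]
      rw [h1, h2]
      exact aux_levy hmeas hindep hsymm (Real.log t / l)
    have hlay1 : ∫⁻ ω, ENNReal.ofReal (Y ω) = ∫⁻ t in Set.Ioi (0 : ℝ), ℙ {a | t < Y a} :=
      lintegral_eq_lintegral_meas_lt ℙ hY0 hYm.aemeasurable
    have hlay2 : ∫⁻ ω, ENNReal.ofReal (Z ω) = ∫⁻ t in Set.Ioi (0 : ℝ), ℙ {a | t < Z a} :=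
      lintegral_eq_lintegral_meas_lt ℙ hZ0 hZm.aemeasurable
    have hmono : ∫⁻ t in Set.Ioi (0 : ℝ), ℙ {a | t < Y a}
        ≤ ∫⁻ t in Set.Ioi (0 : ℝ), 2 * ℙ {a | t < Z a} := by
      refine lintegral_mono_ae ?_
      filter_upwards [self_mem_ae_restrict measurableSet_Ioi] with t ht
      exact hlevy t ht
    have hconst : ∫⁻ t in Set.Ioi (0 : ℝ), 2 * ℙ {a | t < Z a}
        = 2 * ∫⁻ t in Set.Ioi (0 : ℝ), ℙ {a | t < Z a} :=
      lintegral_const_mul' 2 _ (by norm_num)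
    have hZlint : ∫⁻ ω, ENNReal.ofReal (Z ω) = ENNReal.ofReal (∫ ω, Z ω) :=
      (ofReal_integral_eq_lintegral_ofReal hZint hZ0).symm
    have hZle : ∫ ω, Z ω ≤ Real.exp (l ^ 2 * σ ^ 2 / 2) := hsub l
    have hfinal : ∫⁻ ω, ENNReal.ofReal (Y ω)
        ≤ ENNReal.ofReal (2 * Real.exp (l ^ 2 * σ ^ 2 / 2)) := by
      rw [hlay1]
      refine hmono.trans ?_
      rw [hconst, ← hlay2, hZlint]
      calc 2 * ENNReal.ofReal (∫ ω, Z ω)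
          ≤ 2 * ENNReal.ofReal (Real.exp (l ^ 2 * σ ^ 2 / 2)) := by
            exact mul_le_mul_right (ENNReal.ofReal_le_ofReal hZle) 2
        _ = ENNReal.ofReal (2 * Real.exp (l ^ 2 * σ ^ 2 / 2)) := by
            rw [ENNReal.ofReal_mul (by norm_num : (0:ℝ) ≤ 2)]
            norm_num
    rw [integral_eq_lintegral_of_nonneg_ae hY0 hYm.aestronglyMeasurable]
    exact ENNReal.toReal_le_of_le_ofReal (by positivity) hfinal
  · rw [integral_undef hint]
    positivity
end

section
/- Let φ : ℝ → ℝ be non-decreasing and continuously differentiable, and let U, U' be random variables supported in [0, D] with CDFs F_U, F_{U'}. Define ρ(F) = min_{λ ∈ [0,D]} { λ + E_F[φ(X − λ)] } (the optimized certainty equivalent risk restricted to λ ∈ [0,D]). Then |ρ(F_U) − ρ(F_{U'})| ≤ (max_{x ∈ [0,D]} (φ(D − x) − φ(−x))) · sup_t |F_U(t) − F_{U'}(t)|. -/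
open MeasureTheory ProbabilityTheory

private lemma deriv_nonneg_of_monotone' {φ : ℝ → ℝ} (hm : Monotone φ)
    (hd : Differentiable ℝ φ) (x : ℝ) : 0 ≤ deriv φ x := by
  have h := (hd x).hasDerivAt
  rw [hasDerivAt_iff_tendsto_slope] at h
  refine ge_of_tendsto h ?_
  filter_upwards [self_mem_nhdsWithin] with y hy
  have hy' : y ≠ x := hy
  rw [slope_def_field]
  rcases lt_or_gt_of_ne hy' with hlt | hlt
  · have h1 : φ y ≤ φ x := hm hlt.le
    have h2 : y - x < 0 := by linarith
    exact div_nonneg_of_nonpos (by linarith) h2.le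
  · exact div_nonneg (by linarith [hm hlt.le]) (by linarith)

private lemma ftc_Ico' (φ : ℝ → ℝ) (hφdiff : ContDiff ℝ 1 φ) (l x : ℝ) (hx : 0 ≤ x) :
    ∫ u in Set.Ico (0:ℝ) x, deriv φ (u - l) = φ (x - l) - φ (-l) := by
  have hφd : Differentiable ℝ φ := hφdiff.differentiable one_ne_zero
  have hci : Continuous fun u : ℝ => deriv φ (u - l) :=
    (hφdiff.continuous_deriv le_rfl).comp (continuous_id.sub continuous_const)
  have hder : ∀ u : ℝ, HasDerivAt (fun t => φ (t - l)) (deriv φ (u - l)) u := by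
    intro u
    have h := (hφd (u - l)).hasDerivAt.comp u ((hasDerivAt_id u).sub_const l)
    rw [mul_one] at h
    exact h
  have hftc := intervalIntegral.integral_eq_sub_of_hasDerivAt
    (f := fun t => φ (t - l)) (f' := fun u => deriv φ (u - l))
    (fun u _ => hder u) (hci.intervalIntegrable 0 x)
  rw [intervalIntegral.integral_of_le hx] at hftc
  rw [MeasureTheory.integral_Ico_eq_integral_Ioo, ← MeasureTheory.integral_Ioc_eq_integral_Ioo,
    hftc]
  norm_num

private lemma repr_int' (D : ℝ) (φ : ℝ → ℝ) (hφdiff : ContDiff ℝ 1 φ)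
    (μ : Measure ℝ) [IsProbabilityMeasure μ] (hμ : μ (Set.Icc 0 D) = 1) (l : ℝ) :
    ∫ x, φ (x - l) ∂μ
      = φ (-l) + ∫ u in Set.Ico 0 D, deriv φ (u - l) * (μ (Set.Ioi u)).toReal := by
  classical
  set f : ℝ → ℝ → ℝ := fun x u => deriv φ (u - l) * (Set.Ioi u).indicator (fun _ => (1:ℝ)) x
    with hf
  have hci : Continuous fun u : ℝ => deriv φ (u - l) :=
    (hφdiff.continuous_deriv le_rfl).comp (continuous_id.sub continuous_const)
  haveI : IsFiniteMeasure (volume.restrict (Set.Ico (0:ℝ) D)) := by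
    constructor
    rw [Measure.restrict_apply_univ]
    simp [Real.volume_Ico]
  obtain ⟨C, hC⟩ := (isCompact_Icc (a := (0:ℝ)) (b := D)).exists_bound_of_continuousOn
    hci.continuousOn
  have hmeas : Measurable (Function.uncurry f) := by
    apply Measurable.mul
    · exact (hci.measurable).comp measurable_snd
    · have h2 : (fun p : ℝ × ℝ => (Set.Ioi p.2).indicator (fun _ => (1:ℝ)) p.1)
          = Set.indicator {p : ℝ × ℝ | p.2 < p.1} (fun _ => (1:ℝ)) := by
        funext p
        simp [Set.indicator_apply, Set.mem_Ioi, Set.mem_setOf_eq]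
      have h3 : Measurable (fun p : ℝ × ℝ => (Set.Ioi p.2).indicator (fun _ => (1:ℝ)) p.1) := by
        rw [h2]
        exact measurable_const.indicator (measurableSet_lt measurable_snd measurable_fst)
      exact h3
  have hmem : ∀ᵐ p ∂(μ.prod (volume.restrict (Set.Ico 0 D))), p.2 ∈ Set.Ico (0:ℝ) D := by
    rw [ae_iff]
    have hset : {p : ℝ × ℝ | ¬ p.2 ∈ Set.Ico (0:ℝ) D} = Set.univ ×ˢ (Set.Ico (0:ℝ) D)ᶜ := by
      ext p; simp
    rw [hset, Measure.prod_prod, Measure.restrict_apply measurableSet_Ico.compl]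
    simp
  have hFub : Integrable (Function.uncurry f) (μ.prod (volume.restrict (Set.Ico 0 D))) := by
    refine Integrable.mono' (integrable_const C) hmeas.aestronglyMeasurable ?_
    filter_upwards [hmem] with p hp
    have h1 : ‖Function.uncurry f p‖ ≤ ‖deriv φ (p.2 - l)‖ := by
      simp only [Function.uncurry, hf, Set.indicator_apply]
      split_ifs <;> simp [abs_mul, abs_nonneg]
    exact h1.trans (hC p.2 ⟨hp.1, hp.2.le⟩)
  have hpt : ∀ x ∈ Set.Icc (0:ℝ) D,
      φ (x - l) = φ (-l) + ∫ u in Set.Ico (0:ℝ) D, f x u := by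
    intro x hx
    have h1 : ∫ u in Set.Ico (0:ℝ) D, f x u
        = ∫ u in Set.Ico (0:ℝ) D, (Set.Ico (0:ℝ) x).indicator (fun v => deriv φ (v - l)) u := by
      refine setIntegral_congr_fun measurableSet_Ico ?_
      intro u hu
      simp only [hf, Set.indicator_apply, Set.mem_Ioi, Set.mem_Ico]
      by_cases h : u < x
      · simp [h, hu.1]
      · simp [h]
    have h2 : ∫ u in Set.Ico (0:ℝ) D, (Set.Ico (0:ℝ) x).indicator (fun v => deriv φ (v - l)) u
        = ∫ u in Set.Ico (0:ℝ) x, deriv φ (u - l) := by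
      rw [setIntegral_indicator measurableSet_Ico, Set.Ico_inter_Ico]
      simp [min_eq_right hx.2]
    rw [h1, h2, ftc_Ico' φ hφdiff l x hx.1]; ring
  have hae : ∀ᵐ x ∂μ, x ∈ Set.Icc (0:ℝ) D := by
    rw [ae_iff]
    have : {x : ℝ | ¬ x ∈ Set.Icc (0:ℝ) D} = (Set.Icc (0:ℝ) D)ᶜ := rfl
    rw [this, measure_compl measurableSet_Icc (measure_ne_top μ _), hμ, measure_univ]
    simp
  have hIntInner : Integrable (fun x => ∫ u in Set.Ico (0:ℝ) D, f x u) μ :=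
    hFub.integral_prod_left
  calc ∫ x, φ (x - l) ∂μ
      = ∫ x, (φ (-l) + ∫ u in Set.Ico (0:ℝ) D, f x u) ∂μ := by
        refine integral_congr_ae ?_
        filter_upwards [hae] with x hx using hpt x hx
    _ = φ (-l) + ∫ x, (∫ u in Set.Ico (0:ℝ) D, f x u) ∂μ := by
        rw [integral_add (integrable_const _) hIntInner, integral_const, probReal_univ,
          one_smul]
    _ = φ (-l) + ∫ u in Set.Ico (0:ℝ) D, ∫ x, f x u ∂μ := by
        rw [integral_integral_swap hFub]
    _ = φ (-l) + ∫ u in Set.Ico (0:ℝ) D, deriv φ (u - l) * (μ (Set.Ioi u)).toReal := by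
        congr 1
        refine integral_congr_ae (Filter.Eventually.of_forall fun u => ?_)
        rw [hf]
        simp only
        rw [integral_const_mul, integral_indicator_const (1:ℝ) measurableSet_Ioi]
        simp [Measure.real]

private lemma toReal_Ioi (μ : Measure ℝ) [IsProbabilityMeasure μ] (u : ℝ) :
    (μ (Set.Ioi u)).toReal = 1 - cdf μ u := by
  have h1 : Set.Ioi u = (Set.Iic u)ᶜ := (Set.compl_Iic).symm
  rw [h1, measure_compl measurableSet_Iic (measure_ne_top μ _), measure_univ,
    ENNReal.toReal_sub_of_le prob_le_one ENNReal.one_ne_top, ENNReal.toReal_one, cdf_eq_real, Measure.real]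

private lemma key_bound' (D : ℝ) (hD : 0 < D) (φ : ℝ → ℝ)
    (hφmono : Monotone φ) (hφdiff : ContDiff ℝ 1 φ)
    (μ ν : Measure ℝ) [IsProbabilityMeasure μ] [IsProbabilityMeasure ν]
    (hμ : μ (Set.Icc 0 D) = 1) (hν : ν (Set.Icc 0 D) = 1)
    (l : ℝ) (hl : l ∈ Set.Icc (0:ℝ) D) :
    |(∫ x, φ (x - l) ∂μ) - ∫ x, φ (x - l) ∂ν|
      ≤ (φ (D - l) - φ (-l)) * ⨆ t : ℝ, |cdf μ t - cdf ν t| := by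
  have hφd : Differentiable ℝ φ := hφdiff.differentiable one_ne_zero
  have hci : Continuous fun u : ℝ => deriv φ (u - l) :=
    (hφdiff.continuous_deriv le_rfl).comp (continuous_id.sub continuous_const)
  have hd0 : ∀ u : ℝ, 0 ≤ deriv φ (u - l) := fun u =>
    deriv_nonneg_of_monotone' hφmono hφd (u - l)
  set S := ⨆ t : ℝ, |cdf μ t - cdf ν t| with hS
  have hSb : BddAbove (Set.range fun t : ℝ => |cdf μ t - cdf ν t|) := by
    refine ⟨1, ?_⟩
    rintro y ⟨t, rfl⟩
    have := cdf_nonneg μ t; have := cdf_le_one μ t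
    have := cdf_nonneg ν t; have := cdf_le_one ν t
    rw [abs_le]; constructor <;> linarith
  have hSle : ∀ t : ℝ, |cdf μ t - cdf ν t| ≤ S := fun t => le_ciSup hSb t
  have hS0 : 0 ≤ S := (abs_nonneg _).trans (hSle 0)
  haveI : IsFiniteMeasure (volume.restrict (Set.Ico (0:ℝ) D)) := by
    constructor
    rw [Measure.restrict_apply_univ]
    simp [Real.volume_Ico]
  obtain ⟨C, hC⟩ := (isCompact_Icc (a := (0:ℝ)) (b := D)).exists_bound_of_continuousOn
    hci.continuousOn
  -- integrability of both representation integrands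
  have hint : ∀ (κ : Measure ℝ), IsProbabilityMeasure κ →
      Integrable (fun u => deriv φ (u - l) * (κ (Set.Ioi u)).toReal)
        (volume.restrict (Set.Ico (0:ℝ) D)) := by
    intro κ hκ
    have hmeas : Measurable fun u => (κ (Set.Ioi u)).toReal := by
      have hanti : Antitone fun u => (κ (Set.Ioi u)).toReal := by
        intro a b hab
        exact ENNReal.toReal_mono (measure_ne_top κ _) (measure_mono (Set.Ioi_subset_Ioi hab))
      exact hanti.measurable
    refine Integrable.mono' (integrable_const C) ((hci.measurable.mul hmeas).aestronglyMeasurable) ?_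
    filter_upwards [ae_restrict_mem measurableSet_Ico] with u hu
    have h1 : (κ (Set.Ioi u)).toReal ≤ 1 := by
      rw [← ENNReal.toReal_one]
      exact ENNReal.toReal_mono ENNReal.one_ne_top prob_le_one
    have h2 : ‖deriv φ (u - l) * (κ (Set.Ioi u)).toReal‖
        ≤ ‖deriv φ (u - l)‖ * 1 := by
      rw [norm_mul]
      exact mul_le_mul_of_nonneg_left (by simpa [abs_of_nonneg ENNReal.toReal_nonneg] using h1)
        (norm_nonneg _)
    exact h2.trans (by simpa using hC u ⟨hu.1, hu.2.le⟩)
  have hdiff : (∫ x, φ (x - l) ∂μ) - ∫ x, φ (x - l) ∂ν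
      = ∫ u in Set.Ico (0:ℝ) D, deriv φ (u - l) * (cdf ν u - cdf μ u) := by
    rw [repr_int' D φ hφdiff μ hμ l, repr_int' D φ hφdiff ν hν l]
    have := integral_sub (hint μ inferInstance) (hint ν inferInstance)
    rw [show ∀ a b c : ℝ, (a + b) - (a + c) = b - c from fun a b c => by ring, ← this]
    refine integral_congr_ae (Filter.Eventually.of_forall fun u => ?_)
    simp only [toReal_Ioi μ u, toReal_Ioi ν u]
    ring
  rw [hdiff]
  have hbd : ∀ u : ℝ, ‖deriv φ (u - l) * (cdf ν u - cdf μ u)‖ ≤ deriv φ (u - l) * S := by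
    intro u
    rw [norm_mul, Real.norm_eq_abs, Real.norm_eq_abs, abs_of_nonneg (hd0 u), abs_sub_comm]
    exact mul_le_mul_of_nonneg_left (hSle u) (hd0 u)
  have hgint : Integrable (fun u => deriv φ (u - l) * S)
      (volume.restrict (Set.Ico (0:ℝ) D)) :=
    ((hci.mul continuous_const).integrableOn_Icc).mono_set Set.Ico_subset_Icc_self
  have := norm_integral_le_of_norm_le hgint (Filter.Eventually.of_forall hbd)
  rw [Real.norm_eq_abs] at this
  refine this.trans ?_
  rw [integral_mul_const, ftc_Ico' φ hφdiff l D hD.le]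

/-- Lipschitzness (in sup norm of CDFs) of optimized certainty equivalent risks: for
`φ` non-decreasing and `C¹`, and `U, U'` supported in `[0,D]` with laws `μ, ν`,
the OCE risk `ρ(F) = min_{λ ∈ [0,D]} {λ + E_F[φ(X − λ)]}` satisfies
`|ρ(F_U) − ρ(F_{U'})| ≤ (max_{x ∈ [0,D]} (φ(D−x) − φ(−x))) · sup_t |F_U(t) − F_{U'}(t)|`. -/
theorem stmt_15 (D : ℝ) (hD : 0 < D) (φ : ℝ → ℝ)
    (hφmono : Monotone φ) (hφdiff : ContDiff ℝ 1 φ)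
    (μ ν : Measure ℝ) [IsProbabilityMeasure μ] [IsProbabilityMeasure ν]
    (hμ : μ (Set.Icc 0 D) = 1) (hν : ν (Set.Icc 0 D) = 1) :
    |(⨅ l : Set.Icc (0 : ℝ) D, ((l : ℝ) + ∫ x, φ (x - l) ∂μ)) -
        ⨅ l : Set.Icc (0 : ℝ) D, ((l : ℝ) + ∫ x, φ (x - l) ∂ν)| ≤
      (⨆ x : Set.Icc (0 : ℝ) D, (φ (D - x) - φ (-(x : ℝ)))) *
        ⨆ t : ℝ, |cdf μ t - cdf ν t| := by
  haveI hne : Nonempty (Set.Icc (0:ℝ) D) := ⟨⟨0, Set.left_mem_Icc.mpr hD.le⟩⟩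
  set S := ⨆ t : ℝ, |cdf μ t - cdf ν t| with hS
  set K := ⨆ x : Set.Icc (0 : ℝ) D, (φ (D - x) - φ (-(x : ℝ))) with hK
  have hSb : BddAbove (Set.range fun t : ℝ => |cdf μ t - cdf ν t|) := by
    refine ⟨1, ?_⟩
    rintro y ⟨t, rfl⟩
    have := cdf_nonneg μ t; have := cdf_le_one μ t
    have := cdf_nonneg ν t; have := cdf_le_one ν t
    rw [abs_le]; constructor <;> linarith
  have hS0 : 0 ≤ S := (abs_nonneg _).trans (le_ciSup hSb 0)
  have hKb : BddAbove (Set.range fun x : Set.Icc (0:ℝ) D => φ (D - x) - φ (-(x:ℝ))) := by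
    have hcont : Continuous fun x : Set.Icc (0:ℝ) D => φ (D - x) - φ (-(x:ℝ)) :=
      ((hφdiff.continuous.comp (continuous_const.sub continuous_subtype_val)).sub
        (hφdiff.continuous.comp continuous_subtype_val.neg))
    exact (isCompact_range hcont).bddAbove
  have hKle : ∀ lx : Set.Icc (0:ℝ) D, φ (D - lx) - φ (-(lx:ℝ)) ≤ K := fun lx => le_ciSup hKb lx
  have key : ∀ l : Set.Icc (0:ℝ) D,
      |(∫ x, φ (x - l) ∂μ) - ∫ x, φ (x - l) ∂ν| ≤ K * S := fun l =>
    (key_bound' D hD φ hφmono hφdiff μ ν hμ hν l l.2).trans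
      (mul_le_mul_of_nonneg_right (hKle l) hS0)
  -- lower bound / integrability
  have hbb : ∀ (κ : Measure ℝ) (_ : IsProbabilityMeasure κ), κ (Set.Icc 0 D) = 1 →
      BddBelow (Set.range fun l : Set.Icc (0:ℝ) D => (l:ℝ) + ∫ x, φ (x - l) ∂κ) := by
    intro κ hκi hκ
    refine ⟨φ (-D), ?_⟩
    rintro y ⟨l, rfl⟩
    have hae : ∀ᵐ x ∂κ, x ∈ Set.Icc (0:ℝ) D := by
      rw [ae_iff]
      have h0 : {x : ℝ | ¬ x ∈ Set.Icc (0:ℝ) D} = (Set.Icc (0:ℝ) D)ᶜ := rfl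
      rw [h0, measure_compl measurableSet_Icc (measure_ne_top κ _), hκ, measure_univ]
      simp
    set M := max |φ (-(l:ℝ))| |φ (D - l)| with hM
    have hInt : Integrable (fun x => φ (x - (l:ℝ))) κ := by
      refine Integrable.mono' (integrable_const M)
        ((hφdiff.continuous.comp (continuous_id.sub continuous_const)).aestronglyMeasurable) ?_
      filter_upwards [hae] with x hx
      have h1 : φ (-(l:ℝ)) ≤ φ (x - l) := hφmono (by linarith [hx.1])
      have h2 : φ (x - l) ≤ φ (D - l) := hφmono (by linarith [hx.2])
      have h3 := neg_abs_le (φ (-(l:ℝ)))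
      have h4 := le_abs_self (φ (D - (l:ℝ)))
      have h5 := le_max_left |φ (-(l:ℝ))| |φ (D - (l:ℝ))|
      have h6 := le_max_right |φ (-(l:ℝ))| |φ (D - (l:ℝ))|
      rw [Real.norm_eq_abs, abs_le]
      constructor <;> simp only [hM] <;> linarith
    have hge : φ (-D) ≤ ∫ x, φ (x - (l:ℝ)) ∂κ := by
      have h7 : ∫ x, φ (-D) ∂κ = φ (-D) := by simp
      rw [← h7]
      refine integral_mono_ae (integrable_const _) hInt ?_
      filter_upwards [hae] with x hx
      exact hφmono (by linarith [hx.1, l.2.2])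
    show φ (-D) ≤ (l:ℝ) + ∫ x, φ (x - (l:ℝ)) ∂κ
    have := l.2.1
    linarith
  have hbμ := hbb μ inferInstance hμ
  have hbν := hbb ν inferInstance hν
  rw [abs_sub_le_iff]
  constructor
  · have h : (⨅ l : Set.Icc (0:ℝ) D, ((l:ℝ) + ∫ x, φ (x - l) ∂μ)) - K * S
        ≤ ⨅ l : Set.Icc (0:ℝ) D, ((l:ℝ) + ∫ x, φ (x - l) ∂ν) := by
      refine le_ciInf fun l => ?_
      show _ ≤ (l:ℝ) + ∫ x, φ (x - (l:ℝ)) ∂ν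
      have h1 : (⨅ l : Set.Icc (0:ℝ) D, ((l:ℝ) + ∫ x, φ (x - l) ∂μ))
          ≤ (l:ℝ) + ∫ x, φ (x - (l:ℝ)) ∂μ := ciInf_le hbμ l
      have h2 := (abs_le.mp (key l)).2
      linarith
    linarith
  · have h : (⨅ l : Set.Icc (0:ℝ) D, ((l:ℝ) + ∫ x, φ (x - l) ∂ν)) - K * S
        ≤ ⨅ l : Set.Icc (0:ℝ) D, ((l:ℝ) + ∫ x, φ (x - l) ∂μ) := by
      refine le_ciInf fun l => ?_
      show _ ≤ (l:ℝ) + ∫ x, φ (x - (l:ℝ)) ∂μ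
      have h1 : (⨅ l : Set.Icc (0:ℝ) D, ((l:ℝ) + ∫ x, φ (x - l) ∂ν))
          ≤ (l:ℝ) + ∫ x, φ (x - (l:ℝ)) ∂ν := ciInf_le hbν l
      have h2 := (abs_le.mp (key l)).1
      linarith
    linarith
end
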